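/- In any Kleene algebra with tests, [a] · ([a]·x·[¬a] + [¬a]·y·[a])* · [a] ≤ (x·y)*. -/
import Mathlib


/-- In any Kleene algebra with tests,
[a] · ([a]·x·[¬a] + [¬a]·y·[a])* · [a] ≤ (x·y)*. -/
theorem kat_commute_star {X B : Type*} [KleeneAlgebra X] [BooleanAlgebra B]
    (f : B → X)
    (hmul : ∀ a b : B, f (a ⊓ b) = f a * f b)
    (hadd : ∀ a b : B, f (a ⊔ b) = f a + f b)
    (hone : f ⊤ = 1) (hzero : f ⊥ = 0)
    (a : B) (x y : X) :
    f a * KStar.kstar (f a * x * f aᶜ + f aᶜ * y * f a) * f a ≤ KStar.kstar (x * y) := by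
  set p := f a with hp
  set q := f aᶜ with hq
  have hpp : p * p = p := by rw [← hmul, inf_idem]
  have hpq : p * q = 0 := by rw [← hmul, inf_compl_eq_bot, hzero]
  have hqp : q * p = 0 := by rw [← hmul, compl_inf_eq_bot, hzero]
  have h1 : p + q = 1 := by rw [← hadd, sup_compl_eq_top, hone]
  have hp1 : p ≤ 1 := by rw [← h1, add_eq_sup]; exact le_sup_left
  have hq1 : q ≤ 1 := by rw [← h1, add_eq_sup]; exact le_sup_right
  set u := p * x * q + q * y * p with hu
  set w := KStar.kstar (x * y) * (p + p * x * q) with hw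
  have hwu : w * u ≤ w := by
    have expand : w * u = KStar.kstar (x * y) * (p * x * q) +
        KStar.kstar (x * y) * (p * x * (q * y * p)) := by
      rw [hw, hu]
      have hqq : q * q = q := by rw [← hmul, inf_idem]
      have z1 : ∀ t : X, p * (q * t) = 0 := fun t => by rw [← mul_assoc, hpq, zero_mul]
      have z2 : ∀ t : X, q * (p * t) = 0 := fun t => by rw [← mul_assoc, hqp, zero_mul]
      have z3 : ∀ t : X, p * (p * t) = p * t := fun t => by rw [← mul_assoc, hpp]
      have z4 : ∀ t : X, q * (q * t) = q * t := fun t => by rw [← mul_assoc, hqq]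
      have e1 : (p + p * x * q) * (p * x * q + q * y * p)
          = p * x * q + p * x * (q * y * p) := by
        simp only [add_mul, mul_add, mul_assoc, z1, z2, z3, z4, hpp, hpq, hqp, hqq,
          zero_mul, mul_zero, add_zero, zero_add]
      rw [mul_assoc, e1, mul_add]
    rw [expand]
    have h2 : KStar.kstar (x * y) * (p * x * q) ≤ w := by
      rw [hw, mul_add]
      rw [add_eq_sup]; exact le_sup_right
    have h3 : KStar.kstar (x * y) * (p * x * (q * y * p)) ≤ w := by
      have hle : p * x * (q * y * p) ≤ x * y * p := by
        calc p * x * (q * y * p) ≤ 1 * x * (1 * y * p) := by gcongr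
          _ = x * y * p := by simp [mul_assoc]
      calc KStar.kstar (x * y) * (p * x * (q * y * p))
          ≤ KStar.kstar (x * y) * (x * y * p) := by gcongr
        _ = (KStar.kstar (x * y) * (x * y)) * p := by simp [mul_assoc]
        _ ≤ KStar.kstar (x * y) * p := by gcongr; exact kstar_mul_le_kstar
        _ ≤ KStar.kstar (x * y) * (p + p * x * q) := by
            gcongr; rw [add_eq_sup]; exact le_sup_left
        _ = w := hw.symm
    rw [add_eq_sup]; exact sup_le h2 h3
  have hwstar : w * KStar.kstar u ≤ w := mul_kstar_le_self hwu
  have hpw : p ≤ w := by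
    calc p = 1 * p := (one_mul p).symm
      _ ≤ KStar.kstar (x * y) * (p + p * x * q) := by
          apply mul_le_mul'
          · exact one_le_kstar
          · rw [add_eq_sup]; exact le_sup_left
  calc p * KStar.kstar u * p ≤ w * KStar.kstar u * p := by gcongr
    _ ≤ w * p := by gcongr
    _ = KStar.kstar (x * y) * (p * p + p * x * (q * p)) := by
        rw [hw]; simp [mul_add, add_mul, mul_assoc]
    _ = KStar.kstar (x * y) * p := by rw [hpp, hqp, mul_zero, add_zero]
    _ ≤ KStar.kstar (x * y) * 1 := by gcongr
    _ = KStar.kstar (x * y) := mul_one _
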